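/- arXiv:0910.5399 — 10 statements merged into one kernel-verified Lean document; each statement's English description precedes it below -/
import Mathlib

section
/- A set a ⊆ Finset ℕ × ℕ satisfies a = graph(fun(a)) if and only if a is upward closed in its first component, i.e. (S, n) ∈ a and S ⊆ S' imply (S', n) ∈ a. Consequently the upward-closed sets are exactly the graphs of Scott-continuous endofunctions of Set ℕ. -/
/-- `fun(G)` : the continuous function associated to a graph `G`. -/
def graphFun (G : Set (Finset ℕ × ℕ)) : Set ℕ → Set ℕ :=
  fun S => {n : ℕ | ∃ S' : Finset ℕ, ↑S' ⊆ S ∧ (S', n) ∈ G}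

/-- `graph(f)` : the graph of a function `f : Set ℕ → Set ℕ`. -/
def funGraph (f : Set ℕ → Set ℕ) : Set (Finset ℕ × ℕ) :=
  {p : Finset ℕ × ℕ | p.2 ∈ f ↑p.1}

/-- A set `a ⊆ Finset ℕ × ℕ` is upward closed in its first component. -/
def UpwardClosed (a : Set (Finset ℕ × ℕ)) : Prop :=
  ∀ (S : Finset ℕ) (n : ℕ) (S' : Finset ℕ), (S, n) ∈ a → S ⊆ S' → (S', n) ∈ a

lemma graphFun_scottContinuous (G : Set (Finset ℕ × ℕ)) : ScottContinuous (graphFun G) := by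
  intro d hne hdir b hlub
  have hs : (IsLUB d (sSup d)) := isLUB_sSup d
  have hEq : graphFun G (sSup d) = sSup (graphFun G '' d) := by
    apply Set.Subset.antisymm
    · rintro n ⟨S', hS', hG⟩
      have : (S' : Set ℕ) ⊆ ⋃ T ∈ d, id T := by
        simpa [Set.sSup_eq_sUnion, Set.sUnion_eq_biUnion] using hS'
      obtain ⟨T, hTd, hsub⟩ := DirectedOn.exists_mem_subset_of_finset_subset_biUnion hne
        (by simpa using hdir) this
      exact Set.mem_sUnion.2 ⟨graphFun G T, ⟨T, hTd, rfl⟩, ⟨S', hsub, hG⟩⟩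
    · rintro n hn
      rw [Set.sSup_eq_sUnion] at hn
      obtain ⟨_, ⟨T, hTd, rfl⟩, S', hsub, hG⟩ := hn
      exact ⟨S', hsub.trans (le_sSup hTd), hG⟩
  rw [hlub.unique hs, hEq]
  exact isLUB_sSup _

/-- `a = graph(fun(a))` iff `a` is upward closed in its first
component; consequently the upward-closed sets are exactly the graphs of
Scott-continuous endofunctions of `Set ℕ`. -/
theorem graph_graphFun_eq_iff_upwardClosed (a : Set (Finset ℕ × ℕ)) :
    (a = funGraph (graphFun a) ↔ UpwardClosed a) ∧
    (UpwardClosed a ↔ ∃ f : Set ℕ → Set ℕ, ScottContinuous f ∧ a = funGraph f) := by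
  have key : ∀ (a : Set (Finset ℕ × ℕ)), UpwardClosed a → a = funGraph (graphFun a) := by
    intro a ha
    ext ⟨S, n⟩
    constructor
    · intro h
      exact ⟨S, subset_rfl, h⟩
    · rintro ⟨T, hT, hG⟩
      exact ha T n S hG (by exact_mod_cast hT)
  constructor
  · constructor
    · intro h S n S' hSn hSS
      rw [h] at hSn ⊢
      obtain ⟨T, hT, hG⟩ := hSn
      exact ⟨T, hT.trans (by exact_mod_cast hSS), hG⟩
    · exact key a
  · constructor
    · intro ha
      exact ⟨graphFun a, graphFun_scottContinuous a, key a ha⟩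
    · rintro ⟨f, hf, rfl⟩
      intro S n S' hSn hSS
      exact hf.monotone (by exact_mod_cast hSS) hSn
end

section
/- For all sets a, b ⊆ Finset ℕ × ℕ, fun(a · b) = fun(b) ∘ fun(a), where a · b = {(S₁ ∪ ⋯ ∪ S_k, n) | ∃ m₁, …, m_k, ({m₁, …, m_k}, n) ∈ b ∧ (S_i, m_i) ∈ a for i = 1, …, k} (the case k = 0 contributes the pairs (∅, n) with (∅, n) ∈ b). Thus the graph multiplication represents composition of the associated continuous functions. -/
/-- Graph multiplication: `a · b` consists of the pairs `(S₁ ∪ ⋯ ∪ S_k, n)` such that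
there are `m₁, …, m_k` with `({m₁, …, m_k}, n) ∈ b` and `(Sᵢ, mᵢ) ∈ a` for each `i`.
The list `l` enumerates the pairs `(Sᵢ, mᵢ)`; the case `k = 0` contributes the pairs
`(∅, n)` with `(∅, n) ∈ b`. -/
def graphMul (a b : Set (Finset ℕ × ℕ)) : Set (Finset ℕ × ℕ) :=
  {p : Finset ℕ × ℕ | ∃ l : List (Finset ℕ × ℕ),
    ((l.map Prod.snd).toFinset, p.2) ∈ b ∧
    (∀ q ∈ l, q ∈ a) ∧
    p.1 = (l.map Prod.fst).foldr (· ∪ ·) ∅}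

lemma foldr_union_subset_iff {l : List (Finset ℕ)} {S : Set ℕ} :
    ↑(l.foldr (· ∪ ·) ∅) ⊆ S ↔ ∀ t ∈ l, ↑t ⊆ S := by
  induction l with
  | nil => simp
  | cons h t ih => simp [Finset.coe_union, Set.union_subset_iff, ih]

/-- For all `a, b ⊆ Finset ℕ × ℕ`, `fun(a · b) = fun(b) ∘ fun(a)`:
graph multiplication represents composition of the associated continuous functions. -/
theorem graphFun_graphMul (a b : Set (Finset ℕ × ℕ)) :
    graphFun (graphMul a b) = graphFun b ∘ graphFun a := by
  funext S
  ext n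
  constructor
  · rintro ⟨S', hS', l, hb, ha, heq⟩
    refine ⟨(l.map Prod.snd).toFinset, ?_, hb⟩
    intro m hm
    simp only [List.coe_toFinset, List.mem_map] at hm
    obtain ⟨q, hq, rfl⟩ := hm
    refine ⟨q.1, ?_, ha q hq⟩
    refine subset_trans ?_ hS'
    have heq' : S' = (l.map Prod.fst).foldr (· ∪ ·) ∅ := heq
    rw [heq']
    exact foldr_union_subset_iff.mp subset_rfl q.1 (List.mem_map_of_mem hq)
  · rintro ⟨T, hT, hTb⟩
    choose f hf1 hf2 using fun m (hm : m ∈ T) => hT hm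
    classical
    set l : List (Finset ℕ × ℕ) := T.attach.toList.map (fun m => (f m.1 m.2, m.1)) with hl
    refine ⟨(l.map Prod.fst).foldr (· ∪ ·) ∅, ?_, l, ?_, ?_, rfl⟩
    · rw [foldr_union_subset_iff]
      intro t ht
      simp only [hl, List.map_map, List.mem_map] at ht
      obtain ⟨m, _, rfl⟩ := ht
      exact hf1 m.1 m.2
    · have : (l.map Prod.snd).toFinset = T := by
        ext x
        simp only [hl, List.map_map, List.mem_toFinset, List.mem_map, Function.comp]
        constructor
        · rintro ⟨m, _, rfl⟩; exact m.2
        · intro hx; exact ⟨⟨x, hx⟩, by simp, rfl⟩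
      rwa [this]
    · intro q hq
      simp only [hl, List.mem_map] at hq
      obtain ⟨m, _, rfl⟩ := hq
      exact hf2 m.1 m.2
end

section
/- Let code : Finset ℕ × ℕ → ℕ be any injective function. Define e : (Set ℕ → Set ℕ) → Set ℕ by e(f) = code '' graph(f) and p : Set ℕ → (Set ℕ → Set ℕ) by p(S) = fun({(S', n) | code(S', n) ∈ S}). Then for every Scott-continuous f : Set ℕ → Set ℕ, p(e(f)) = f; that is, the continuous function space [Set ℕ → Set ℕ] is a retract of Set ℕ. -/
/-- `e(f) = code '' graph(f)` : encoding of a function as a set of naturals. -/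
def embed (code : Finset ℕ × ℕ → ℕ) (f : Set ℕ → Set ℕ) : Set ℕ :=
  code '' funGraph f

/-- `p(S) = fun({(S', n) | code (S', n) ∈ S})` : projection of a set of naturals
to a function. -/
def project (code : Finset ℕ × ℕ → ℕ) (S : Set ℕ) : Set ℕ → Set ℕ :=
  graphFun {p : Finset ℕ × ℕ | code p ∈ S}


/-- For any injective `code : Finset ℕ × ℕ → ℕ` and every
Scott-continuous `f : Set ℕ → Set ℕ`, `p(e(f)) = f`: the continuous function space
is a retract of `Set ℕ`. -/
theorem project_embed (code : Finset ℕ × ℕ → ℕ) (hcode : Function.Injective code)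
    (f : Set ℕ → Set ℕ) (hf : ScottContinuous f) :
    project code (embed code f) = f := by
  funext S
  ext n
  simp only [project, embed, graphFun, Set.mem_setOf_eq]
  constructor
  · rintro ⟨S', hS', hmem⟩
    obtain ⟨q, hq, hcq⟩ := hmem
    have : q = (S', n) := hcode hcq
    subst this
    exact hf.monotone hS' hq
  · intro hn
    set d : Set (Set ℕ) := {T | ∃ S' : Finset ℕ, ↑S' ⊆ S ∧ T = ↑S'} with hd
    have hdne : d.Nonempty := ⟨(∅ : Finset ℕ), ∅, by simp⟩
    have hdir : DirectedOn (· ≤ ·) d := by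
      rintro _ ⟨A, hA, rfl⟩ _ ⟨B, hB, rfl⟩
      exact ⟨↑(A ∪ B), ⟨A ∪ B, by simp [Set.union_subset hA hB], rfl⟩,
        by simp [Set.subset_union_left], by simp [Set.subset_union_right]⟩
    have hlub : IsLUB d S := by
      constructor
      · rintro _ ⟨A, hA, rfl⟩; exact hA
      · intro T hT x hx
        exact hT ⟨({x} : Finset ℕ), by simpa using hx, rfl⟩ (by simp)
    have h2 : IsLUB (f '' d) (f S) := hf hdne hdir hlub
    have hub : f S ≤ ⋃₀ (f '' d) := h2.2 (fun t ht x hx => ⟨t, ht, hx⟩)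
    obtain ⟨_, ⟨T, ⟨A, hA, rfl⟩, rfl⟩, hnT⟩ := hub hn
    exact ⟨A, hA, (A, n), hnT, rfl⟩
end

section
/- Let code : Finset ℕ × ℕ → ℕ be any injective function, and define e : (Set ℕ → Set ℕ) → Set ℕ by e(f) = code '' graph(f) and p : Set ℕ → (Set ℕ → Set ℕ) by p(S) = fun({(S', n) | code(S', n) ∈ S}). Then e is Scott-continuous with respect to the pointwise order on Set ℕ → Set ℕ, and p is Scott-continuous from Set ℕ to Set ℕ → Set ℕ with the pointwise order. -/
/-- For any injective `code : Finset ℕ × ℕ → ℕ`, the map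
`e : (Set ℕ → Set ℕ) → Set ℕ`, `e(f) = code '' graph(f)`, is Scott-continuous with
respect to the pointwise order on `Set ℕ → Set ℕ`, and the map
`p : Set ℕ → (Set ℕ → Set ℕ)`, `p(S) = fun({(S', n) | code (S', n) ∈ S})`, is
Scott-continuous into `Set ℕ → Set ℕ` with the pointwise order. -/
theorem scott_continuous_embed_project (code : Finset ℕ × ℕ → ℕ)
    (hcode : Function.Injective code) :
    ScottContinuous (fun f : Set ℕ → Set ℕ => code '' funGraph f) ∧
    ScottContinuous (fun S : Set ℕ => graphFun {p : Finset ℕ × ℕ | code p ∈ S}) := by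
  constructor
  · intro d _ _ a hlub
    constructor
    · rintro _ ⟨f, hf, rfl⟩ x ⟨pr, hpr, rfl⟩
      exact ⟨pr, hlub.1 hf (↑pr.1) hpr, rfl⟩
    · intro g hg x hx
      obtain ⟨pr, hpr, rfl⟩ := hx
      have ha : sSup d = a := hlub.sSup_eq
      have : pr.2 ∈ sSup d (↑pr.1) := ha ▸ hpr
      rw [sSup_apply] at this
      obtain ⟨⟨f, hf⟩, hmem⟩ := Set.mem_iUnion.mp this
      exact hg ⟨f, hf, rfl⟩ ⟨pr, hmem, rfl⟩
  · intro d _ _ a hlub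
    constructor
    · rintro _ ⟨S, hS, rfl⟩ X n ⟨S', hsub, hc⟩
      exact ⟨S', hsub, hlub.1 hS hc⟩
    · intro g hg X n hn
      obtain ⟨S', hsub, hc⟩ := hn
      have ha : sSup d = a := hlub.sSup_eq
      have : code (S', n) ∈ sSup d := ha ▸ hc
      obtain ⟨T, hT, hmem⟩ := (by rwa [Set.sSup_eq_sUnion, Set.mem_sUnion] at this)
      exact hg ⟨T, hT, rfl⟩ X ⟨S', hsub, hmem⟩
end

section
/- Let M and N be monoids and C a set (type). There is a bijection between monoid homomorphisms from the free monoid on C to Set (M × N) (with the pointwise product monoid structure induced by the product monoid M × N) and monoid homomorphisms from the free monoid on N × C to Set M (with the pointwise product monoid structure), given by sending f to the homomorphism determined on generators by (b, c) ↦ {a ∈ M | (a, b) ∈ f(of c)}. This exhibits the exponential law MonRel(M ⊗ N, C*) ≅ MonRel(M, (N × C)*). -/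
open Pointwise

/-- For monoids `M`, `N` and a type `C`, the map sending a monoid
homomorphism `f : FreeMonoid C →* Set (M × N)` to the homomorphism
`FreeMonoid (N × C) →* Set M` determined on generators by
`(b, c) ↦ {a ∈ M | (a, b) ∈ f (of c)}` is a bijection: the exponential law
`MonRel(M ⊗ N, C*) ≅ MonRel(M, (N × C)*)`. -/
theorem exponential_law_bijective {M N : Type*} [Monoid M] [Monoid N] (C : Type*) :
    Function.Bijective
      (fun f : FreeMonoid C →* Set (M × N) =>
        (FreeMonoid.lift fun bc : N × C =>
          {a : M | (a, bc.1) ∈ f (FreeMonoid.of bc.2)} :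
          FreeMonoid (N × C) →* Set M)) := by
  constructor
  · intro f f' h
    apply FreeMonoid.hom_eq
    intro c
    ext ⟨a, b⟩
    have := congrArg (fun g : FreeMonoid (N × C) →* Set M => g (FreeMonoid.of (b, c))) h
    simp only [FreeMonoid.lift_eval_of] at this
    exact Set.ext_iff.mp this a
  · intro g
    refine ⟨FreeMonoid.lift (fun c => {p : M × N | p.1 ∈ g (FreeMonoid.of (p.2, c))}), ?_⟩
    apply FreeMonoid.hom_eq
    rintro ⟨b, c⟩
    simp [FreeMonoid.lift_eval_of]
end

section
/- Let A be a type and f : A → ℕ an injective function. Define the relations In ⊆ List A × List ℕ by In = {(l, l.map f) | l : List A} and Out ⊆ List ℕ × List A by Out = {(l.map f, l) | l : List A}. Then In and Out are graph morphisms between the free monoids List A and List ℕ (under concatenation), and their relational composite In ⨾ Out is the identity relation on List A: for all l, l', (∃ m, In(l, m) ∧ Out(m, l')) ↔ l = l'. Hence the free monoid on any countable set is a retract of the free monoid on ℕ in the category of monoids and graph morphisms. -/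
/-- A relation between the free monoids `List A` and `List B` (lists under
concatenation, with the empty list as identity) is a *graph morphism* if:
(i) `[] R []`; (ii) `a₁ R b₁` and `a₂ R b₂` imply `(a₁ ++ a₂) R (b₁ ++ b₂)`;
(iii) `a R []` implies `a = []`; (iv) if `a R (b₁ ++ b₂)` then there are `a₁, a₂`
with `a = a₁ ++ a₂`, `a₁ R b₁` and `a₂ R b₂`. -/
def IsListGraphMorphism {A B : Type*} (R : List A → List B → Prop) : Prop :=
  R [] [] ∧
  (∀ a₁ b₁ a₂ b₂, R a₁ b₁ → R a₂ b₂ → R (a₁ ++ a₂) (b₁ ++ b₂)) ∧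
  (∀ a, R a [] → a = []) ∧
  (∀ a b₁ b₂, R a (b₁ ++ b₂) → ∃ a₁ a₂, a = a₁ ++ a₂ ∧ R a₁ b₁ ∧ R a₂ b₂)

/-- For injective `f : A → ℕ`, the relations
`In = {(l, l.map f)}` and `Out = {(l.map f, l)}` are graph morphisms between the
free monoids `List A` and `List ℕ`, and their relational composite `In ⨾ Out` is
the identity relation on `List A`. Hence the free monoid on any countable set is
a retract of the free monoid on `ℕ` in the category of monoids and graph
morphisms. -/
theorem free_monoid_retract_of_injective {A : Type*} (f : A → ℕ)
    (hf : Function.Injective f) :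
    IsListGraphMorphism (fun (l : List A) (m : List ℕ) => m = l.map f) ∧
    IsListGraphMorphism (fun (m : List ℕ) (l : List A) => m = l.map f) ∧
    (∀ l l' : List A,
      (∃ m : List ℕ, m = l.map f ∧ m = l'.map f) ↔ l = l') := by
  refine ⟨⟨rfl, ?_, ?_, ?_⟩, ⟨rfl, ?_, ?_, ?_⟩, ?_⟩
  · rintro a₁ b₁ a₂ b₂ rfl rfl; simp
  · intro a h; exact List.map_eq_nil_iff.mp h.symm
  · intro a b₁ b₂ h
    obtain ⟨a₁, a₂, rfl, h1, h2⟩ := List.map_eq_append_iff.mp h.symm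
    exact ⟨a₁, a₂, rfl, h1.symm, h2.symm⟩
  · rintro a₁ b₁ a₂ b₂ rfl rfl; simp
  · rintro a rfl; rfl
  · rintro a b₁ b₂ rfl
    exact ⟨b₁.map f, b₂.map f, by simp, rfl, rfl⟩
  · intro l l'
    constructor
    · rintro ⟨m, rfl, h⟩
      exact (List.map_injective_iff.mpr hf) h
    · rintro rfl; exact ⟨l.map f, rfl, rfl⟩
end

section
/- Let A be a type and r a reflexive symmetric binary relation on A. Then the induced list-coherence relation ≈* on List A is a coherence relation on the free monoid List A: it is reflexive and symmetric, it satisfies prefix closure (l₁ ++ l₂ ≈* l₁' ++ l₂' implies l₁ ≈* l₁'), and it satisfies extension (l ++ l₁ ≈* l ++ l₂ implies l₁ ≈* l₂). -/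
/-- The list-coherence relation induced by a relation `r` on `A`:
`l ≈* l'` iff for every index `i < min (|l|) (|l'|)`, if `l.take i = l'.take i`
then `r` relates the `i`-th entries of `l` and `l'`. -/
def ListCoh {A : Type*} (r : A → A → Prop) (l l' : List A) : Prop :=
  ∀ (i : ℕ) (h : i < l.length) (h' : i < l'.length),
    l.take i = l'.take i → r (l.get ⟨i, h⟩) (l'.get ⟨i, h'⟩)

/-- If `r` is a reflexive symmetric relation on `A`, then the
induced list-coherence relation on `List A` is a coherence relation on the free
monoid `List A`: it is reflexive and symmetric, satisfies prefix closure
(`l₁ ++ l₂ ≈* l₁' ++ l₂'` implies `l₁ ≈* l₁'`) and extension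
(`l ++ l₁ ≈* l ++ l₂` implies `l₁ ≈* l₂`). -/
theorem listCoh_isCoherenceRel {A : Type*} (r : A → A → Prop)
    (hrefl : ∀ a, r a a) (hsymm : ∀ a b, r a b → r b a) :
    (∀ l : List A, ListCoh r l l) ∧
    (∀ l l' : List A, ListCoh r l l' → ListCoh r l' l) ∧
    (∀ l₁ l₂ l₁' l₂' : List A, ListCoh r (l₁ ++ l₂) (l₁' ++ l₂') → ListCoh r l₁ l₁') ∧
    (∀ l l₁ l₂ : List A, ListCoh r (l ++ l₁) (l ++ l₂) → ListCoh r l₁ l₂) := by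
  refine ⟨?_, ?_, ?_, ?_⟩
  · intro l i h h' _
    exact hrefl _
  · intro l l' H i h h' ht
    exact hsymm _ _ (H i h' h ht.symm)
  · intro l₁ l₂ l₁' l₂' H i h h' ht
    have h1 : i < (l₁ ++ l₂).length := by simp; omega
    have h2 : i < (l₁' ++ l₂').length := by simp; omega
    have := H i h1 h2 (by
      rw [List.take_append_of_le_length h.le, List.take_append_of_le_length h'.le, ht])
    simpa [List.get_eq_getElem, List.getElem_append_left, h, h'] using this
  · intro l l₁ l₂ H i h h' ht
    have h1 : l.length + i < (l ++ l₁).length := by simp; omega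
    have h2 : l.length + i < (l ++ l₂).length := by simp; omega
    have := H (l.length + i) h1 h2 (by
      rw [List.take_append, List.take_append, Nat.add_sub_cancel_left, ht])
    simpa [List.get_eq_getElem, List.getElem_append_right] using this
end

section
/- Let B be a monoid with a coherence relation ≈_B, let A be a type with a reflexive symmetric relation r, and let ≈* be the induced list-coherence relation on List A. Let R ⊆ B × A be a relation such that whenever b R a, b' R a' and b ≈_B b', then r a a', and moreover a = a' implies b = b'. Define R* ⊆ B × List A by: b R* [a₁, …, aₙ] iff there exist b₁, …, bₙ ∈ B with b = b₁ * ⋯ * bₙ and bᵢ R aᵢ for each i (in particular b R* [] iff b = 1). Then R* satisfies the coherence map conditions: if b ≈_B b', b R* s and b' R* s', then s ≈* s'; and if b ≈_B b', b R* s and b' R* s, then b = b'. -/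
/-- A *coherence relation* on a monoid `B`: a reflexive symmetric relation
satisfying prefix closure and extension. -/
def IsCoherenceRel {B : Type*} [Monoid B] (c : B → B → Prop) : Prop :=
  (∀ b, c b b) ∧
  (∀ b b', c b b' → c b' b) ∧
  (∀ a₁ a₂ a₁' a₂', c (a₁ * a₂) (a₁' * a₂') → c a₁ a₁') ∧
  (∀ a a₁ a₂, c (a * a₁) (a * a₂) → c a₁ a₂)

/-- `R*` : the extension of a relation `R ⊆ B × A` to a relation `⊆ B × List A`:
`b R* [a₁, …, aₙ]` iff there are `b₁, …, bₙ` with `b = b₁ * ⋯ * bₙ` and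
`bᵢ R aᵢ` for each `i` (so `b R* []` iff `b = 1`). -/
def RStar {B A : Type*} [Monoid B] (R : B → A → Prop) (b : B) (l : List A) : Prop :=
  ∃ bs : List B, List.Forall₂ R bs l ∧ b = bs.prod

/-- Let `B` be a monoid with a coherence relation `cB`, `r` a
reflexive symmetric relation on `A`, and `R ⊆ B × A` such that whenever `b R a`,
`b' R a'` and `cB b b'`, then `r a a'`, and moreover `a = a'` implies `b = b'`.
Then `R*` satisfies the coherence map conditions into `(List A, ≈*)`. -/
theorem rStar_cohMap {B A : Type*} [Monoid B]
    (cB : B → B → Prop) (hcB : IsCoherenceRel cB)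
    (r : A → A → Prop) (hrefl : ∀ a, r a a) (hsymm : ∀ a a', r a a' → r a' a)
    (R : B → A → Prop)
    (hR : ∀ b a b' a', R b a → R b' a' → cB b b' → r a a' ∧ (a = a' → b = b')) :
    (∀ b b' s s', cB b b' → RStar R b s → RStar R b' s' → ListCoh r s s') ∧
    (∀ b b' s, cB b b' → RStar R b s → RStar R b' s → b = b') := by
  obtain ⟨hrefl', hsym', hpre, hext⟩ := hcB
  have key : ∀ s s' (bs bs' : List B), List.Forall₂ R bs s → List.Forall₂ R bs' s' →
      cB bs.prod bs'.prod → ListCoh r s s' ∧ (s = s' → bs = bs') := by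
    intro s
    induction s with
    | nil =>
      intro s' bs bs' h1 h2 hc
      cases h1
      constructor
      · intro i h; exact absurd h (by simp)
      · rintro rfl; cases h2; rfl
    | cons a t ih =>
      intro s' bs bs' h1 h2 hc
      cases h1 with
      | cons hb0 hbt =>
        rename_i b0 bsr
        cases s' with
        | nil =>
          constructor
          · intro i h h'; exact absurd h' (by simp)
          · intro h; simp at h
        | cons a' t' =>
          cases h2 with
          | cons hb0' hbt' =>
            rename_i b0' bsr'
            simp only [List.prod_cons] at hc
            have hc0 : cB b0 b0' := hpre _ _ _ _ hc
            have hmain := hR _ _ _ _ hb0 hb0' hc0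
            constructor
            · intro i hi hi' htake
              cases i with
              | zero => simpa using hmain.1
              | succ n =>
                simp only [List.take_succ_cons, List.cons.injEq] at htake
                obtain ⟨rfl, htk⟩ := htake
                have hb : b0 = b0' := hmain.2 rfl
                subst hb
                have hct : cB bsr.prod bsr'.prod := hext _ _ _ hc
                exact (ih t' bsr bsr' hbt hbt' hct).1 n
                  (by simpa using hi) (by simpa using hi') htk
            · intro heq
              injection heq with he1 he2
              subst he1
              have hb : b0 = b0' := hmain.2 rfl
              subst hb
              have hct : cB bsr.prod bsr'.prod := hext _ _ _ hc
              rw [(ih t' bsr bsr' hbt hbt' hct).2 he2]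
  constructor
  · rintro b b' s s' hc ⟨bs, h1, rfl⟩ ⟨bs', h2, rfl⟩
    exact (key s s' bs bs' h1 h2 hc).1
  · rintro b b' s hc ⟨bs, h1, rfl⟩ ⟨bs', h2, rfl⟩
    rw [(key s s bs bs' h1 h2 hc).2 rfl]
end

section
/- Let C and A be types with binary relations ≈_C and ≈_A, with ≈_A reflexive, and let B be a type with a binary relation ≈_B. Define the relation ≍ on A × B by (a, b) ≍ (a', b') iff (a ≈_A a' → b ≈_B b') and (a ≈_A a' ∧ b = b' → a = a'). Then for any relation R ⊆ C × (A × B), the following are equivalent: (1) for all (c, (a, b)) and (c', (a', b')) in R: c ≈_C c' implies (a, b) ≍ (a', b'), and c ≈_C c' together with (a, b) = (a', b') implies c = c'; (2) for all (c, (a, b)) and (c', (a', b')) in R: c ≈_C c' and a ≈_A a' imply b ≈_B b', and c ≈_C c', a ≈_A a' and b = b' imply a = a' and c = c'. (This is the key equivalence establishing the exponential law in the category of coherence monoids.) -/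
/-- The coherence relation `≍` on `A × B` induced by relations `ca` on `A` and
`cb` on `B`: `(a, b) ≍ (a', b')` iff (`ca a a' → cb b b'`) and
(`ca a a' ∧ b = b' → a = a'`). -/
def ExpCoh {A B : Type*} (ca : A → A → Prop) (cb : B → B → Prop)
    (p p' : A × B) : Prop :=
  (ca p.1 p'.1 → cb p.2 p'.2) ∧ (ca p.1 p'.1 ∧ p.2 = p'.2 → p.1 = p'.1)

/-- Let `cc`, `ca`, `cb` be relations on `C`, `A`, `B` with `ca`
reflexive. For any `R ⊆ C × (A × B)`, the coherence map conditions into the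
exponential coherence object `(A × B, ≍)` are equivalent to the coherence map
conditions for the corresponding relation from `C ⊗ A` to `B`. -/
theorem exp_cohMap_iff {C A B : Type*}
    (cc : C → C → Prop) (ca : A → A → Prop) (cb : B → B → Prop)
    (hca : ∀ a, ca a a)
    (R : C → A × B → Prop) :
    ((∀ c c' a b a' b', R c (a, b) → R c' (a', b') → cc c c' →
        ExpCoh ca cb (a, b) (a', b')) ∧
     (∀ c c' a b a' b', R c (a, b) → R c' (a', b') → cc c c' →
        (a, b) = (a', b') → c = c'))
    ↔
    ((∀ c c' a b a' b', R c (a, b) → R c' (a', b') → cc c c' → ca a a' → cb b b') ∧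
     (∀ c c' a b a' b', R c (a, b) → R c' (a', b') → cc c c' → ca a a' → b = b' →
        a = a' ∧ c = c')) := by
  constructor
  · rintro ⟨h1, h2⟩
    refine ⟨fun c c' a b a' b' hR hR' hc hca' => (h1 c c' a b a' b' hR hR' hc).1 hca',
      fun c c' a b a' b' hR hR' hc hca' hb => ?_⟩
    have ha := (h1 c c' a b a' b' hR hR' hc).2 ⟨hca', hb⟩
    exact ⟨ha, h2 c c' a b a' b' hR hR' hc (by simp_all)⟩
  · rintro ⟨h1, h2⟩
    refine ⟨fun c c' a b a' b' hR hR' hc => ⟨fun hca' => h1 c c' a b a' b' hR hR' hc hca',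
      fun ⟨hca', hb⟩ => (h2 c c' a b a' b' hR hR' hc hca' hb).1⟩,
      fun c c' a b a' b' hR hR' hc heq => ?_⟩
    obtain ⟨ha, hb⟩ := Prod.mk.injEq .. ▸ heq
    subst ha; subst hb
    exact (h2 c c' a b a b hR hR' hc (hca a) rfl).2
end

section
/- Define SCI types by T ::= comm | nat | var | arrow T₁ T₂, with alphabets α(T) and relations ≈_T, ≤⁺_T, ≤⁻_T on α(T) as given. Then for every SCI type T and all lists a, a' over α(T): (i) if a and a' are pointwise related by ≤⁻_T (via List.Forall₂) and a ≈*_T a' (list-coherence induced by ≈_T), then a = a'; (ii) if a and a' are pointwise related by ≤⁺_T, then a ≈*_T a'. -/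
/-- SCI types: `T ::= comm | nat | var | arrow T₁ T₂`. -/
inductive SCIType : Type
  | comm : SCIType
  | nat : SCIType
  | var : SCIType
  | arrow : SCIType → SCIType → SCIType

/-- The alphabet of a SCI type. For `var`, `Sum.inl n` is `read(n)` and
`Sum.inr n` is `write(n)`. -/
def SCIAlpha : SCIType → Type
  | .comm => Unit
  | .nat => ℕ
  | .var => ℕ ⊕ ℕ
  | .arrow T₁ T₂ => List (SCIAlpha T₁) × SCIAlpha T₂

/-- The coherence relation `≈_T` on the alphabet of each SCI type:
on `comm` it always holds; on `nat` it is equality; on `var`, two reads cohere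
iff they read the same value and all other pairs cohere; on `arrow T₁ T₂`,
`(s, b) ≈ (s', b')` iff (`s ≈* s' → b ≈ b'`) and (`s ≈* s' ∧ b = b' → s = s'`). -/
def SCICoh : (T : SCIType) → SCIAlpha T → SCIAlpha T → Prop
  | .comm, _, _ => True
  | .nat, n, m => n = m
  | .var, a, a' => ∀ n m : ℕ, a = Sum.inl n → a' = Sum.inl m → n = m
  | .arrow T₁ T₂, p, p' =>
      (ListCoh (SCICoh T₁) p.1 p'.1 → SCICoh T₂ p.2 p'.2) ∧
      (ListCoh (SCICoh T₁) p.1 p'.1 ∧ p.2 = p'.2 → p.1 = p'.1)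

/-- The read-write orders: `SCIrw true T` is the positive order `≤⁺_T` and
`SCIrw false T` is the negative order `≤⁻_T`. On `comm` and `nat` both are
equality; on `var`, `≤⁻` is equality and `a ≤⁺ a'` iff `a = a'` or `a` is a read
and `a'` the corresponding write; on `arrow T₁ T₂` the order on arguments is
reversed (pointwise, via `List.Forall₂`). -/
def SCIrw : Bool → (T : SCIType) → SCIAlpha T → SCIAlpha T → Prop
  | _, .comm, a, a' => a = a'
  | _, .nat, a, a' => a = a'
  | true, .var, a, a' => a = a' ∨ ∃ n : ℕ, a = Sum.inl n ∧ a' = Sum.inr n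
  | false, .var, a, a' => a = a'
  | s, .arrow T₁ T₂, p, p' =>
      List.Forall₂ (SCIrw (!s) T₁) p.1 p'.1 ∧ SCIrw s T₂ p.2 p'.2

lemma listCoh_of_forall₂ {A : Type*} {r coh : A → A → Prop}
    (h : ∀ x y, r x y → coh x y) {a a' : List A}
    (hf : List.Forall₂ r a a') : ListCoh coh a a' := by
  rw [List.forall₂_iff_get] at hf
  intro i hi hi' _
  exact h _ _ (hf.2 i hi hi')

lemma eq_of_forall₂_listCoh {A : Type*} {r coh : A → A → Prop}
    (h : ∀ x y, r x y → coh x y → x = y) {a a' : List A}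
    (hf : List.Forall₂ r a a') : ListCoh coh a a' → a = a' := by
  induction hf with
  | nil => intro _; rfl
  | @cons x y l l' hr _ ih =>
    intro hc
    have hx : x = y := h _ _ hr (hc 0 (Nat.succ_pos _) (Nat.succ_pos _) rfl)
    subst hx
    have : l = l' := by
      apply ih
      intro i hi hi' ht
      have := hc (i + 1) (Nat.succ_lt_succ hi) (Nat.succ_lt_succ hi')
        (by simpa [List.take_succ_cons] using ht)
      simpa using this
    rw [this]

lemma sci_elem : ∀ T : SCIType,
    (∀ x y, SCIrw false T x y → SCICoh T x y → x = y) ∧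
    (∀ x y, SCIrw true T x y → SCICoh T x y) := by
  intro T
  induction T with
  | comm => exact ⟨fun x y h _ => h, fun _ _ _ => trivial⟩
  | nat => exact ⟨fun x y h _ => h, fun x y h => h⟩
  | var =>
    refine ⟨fun x y h _ => h, ?_⟩
    intro x y h n m hx hy
    rcases h with rfl | ⟨k, rfl, rfl⟩
    · rw [hx] at hy; exact Sum.inl.injEq .. ▸ hy
    · cases hy
  | arrow T₁ T₂ ih₁ ih₂ =>
    constructor
    · rintro ⟨s, b⟩ ⟨s', b'⟩ ⟨hs, hb⟩ ⟨hc1, hc2⟩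
      have hls : ListCoh (SCICoh T₁) s s' := listCoh_of_forall₂ ih₁.2 hs
      have hb' : b = b' := ih₂.1 _ _ hb (hc1 hls)
      have hs' : s = s' := hc2 ⟨hls, hb'⟩
      subst hs' hb'; rfl
    · rintro ⟨s, b⟩ ⟨s', b'⟩ ⟨hs, hb⟩
      exact ⟨fun _ => ih₂.2 _ _ hb,
        fun ⟨hls, _⟩ => eq_of_forall₂_listCoh ih₁.1 hs hls⟩

/-- For every SCI type `T` and all lists `a, a'` over the
alphabet of `T`: (i) if `a` and `a'` are pointwise related by `≤⁻_T` and
list-coherent, then `a = a'`; (ii) if `a` and `a'` are pointwise related by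
`≤⁺_T`, then they are list-coherent. -/
theorem sci_coherence_and_order (T : SCIType) (a a' : List (SCIAlpha T)) :
    (List.Forall₂ (SCIrw false T) a a' → ListCoh (SCICoh T) a a' → a = a') ∧
    (List.Forall₂ (SCIrw true T) a a' → ListCoh (SCICoh T) a a') := by
  exact ⟨fun hf => eq_of_forall₂_listCoh (sci_elem T).1 hf,
    fun hf => listCoh_of_forall₂ (sci_elem T).2 hf⟩
end
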